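/- Let R be a Jacobi-diagonalizable Jacobi-orthogonal algebraic curvature tensor on a scalar product space (V, g). If X ∈ V is nonnull, λ ∈ ℝ, Y ∈ V satisfies g(Y, X) = 0 and J_X Y = ε_X λ Y, then J_Y X = ε_Y λ X + Z for some Z ∈ V with g(Z, Z) = 0. -/

import Mathlib

/- Common definitions: scalar product space (V, g) with nondegenerate symmetric bilinear
form g, algebraic curvature tensors, Jacobi operators, and derived notions. -/

variable {V : Type*} [AddCommGroup V] [Module ℝ V]

/-- `R` is quadrilinear and satisfies the symmetries of an algebraic curvature tensor. -/
def IsCurv (R : V → V → V → V → ℝ) : Prop :=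
  (∀ (a : ℝ) (X X' Y Z W : V), R (a • X + X') Y Z W = a * R X Y Z W + R X' Y Z W) ∧
  (∀ (a : ℝ) (X Y Y' Z W : V), R X (a • Y + Y') Z W = a * R X Y Z W + R X Y' Z W) ∧
  (∀ (a : ℝ) (X Y Z Z' W : V), R X Y (a • Z + Z') W = a * R X Y Z W + R X Y Z' W) ∧
  (∀ (a : ℝ) (X Y Z W W' : V), R X Y Z (a • W + W') = a * R X Y Z W + R X Y Z W') ∧
  (∀ X Y Z W : V, R X Y Z W = - R Y X Z W) ∧
  (∀ X Y Z W : V, R X Y Z W = - R X Y W Z) ∧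
  (∀ X Y Z W : V, R X Y Z W = R Z W X Y) ∧
  (∀ X Y Z W : V, R X Y Z W + R Y Z X W + R Z X Y W = 0)

/-- `J X` is the Jacobi operator of `R`: the unique linear map with
`g (J X Y) Z = R Y X X Z` for all `Y Z`. -/
def IsJacobi (g : V →ₗ[ℝ] V →ₗ[ℝ] ℝ) (R : V → V → V → V → ℝ) (J : V → V →ₗ[ℝ] V) : Prop :=
  ∀ X Y Z : V, g (J X Y) Z = R Y X X Z

/-- Jacobi-orthogonality: `g (J_X Y) (J_Y X) = 0` for all mutually orthogonal unit `X Y`. -/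
def JacobiOrthogonal (g : V →ₗ[ℝ] V →ₗ[ℝ] ℝ) (J : V → V →ₗ[ℝ] V) : Prop :=
  ∀ X Y : V, (g X X = 1 ∨ g X X = -1) → (g Y Y = 1 ∨ g Y Y = -1) → g X Y = 0 →
    g (J X Y) (J Y X) = 0
/-- An endomorphism is diagonalizable iff its eigenspaces span. -/
def IsDiagonalizable (f : V →ₗ[ℝ] V) : Prop :=
  (⨆ μ : ℝ, Module.End.eigenspace f μ) = ⊤

/-- `R` (via its Jacobi operator `J`) is Jacobi-diagonalizable. -/
def JacobiDiagonalizable (g : V →ₗ[ℝ] V →ₗ[ℝ] ℝ) (J : V → V →ₗ[ℝ] V) : Prop :=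
  ∀ X : V, g X X ≠ 0 → IsDiagonalizable (J X)

/-! Jacobi-orthogonality, assumed for orthonormal pairs, extends by rescaling to orthogonal
nonnull pairs, and then to every `B ⊥ A` with `A` nonnull: `B + t • U` is nonnull for all but
finitely many `t`, and the quantity is polynomial in `t`. Applied to the orthogonal pair
`A = X + a • Y`, `B = -(a ε_Y) • X + ε_X • Y`, for which `J_A B` and `J_B A` are explicit
combinations of `Y` and `J_Y X`, it gives `g (J_Y X) (J_Y X) = ε_X ε_Y² λ²`. Together with
`g (J_Y X) X = ε_X ε_Y λ`, this makes `Z = J_Y X - (ε_Y λ) • X` null. -/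

open Polynomial

theorem Polynomial.eq_zero_of_isRoot_of_not_isRoot {R : Type*} [CommRing R] [IsDomain R]
    [Infinite R] {p q : R[X]} (hq : q ≠ 0) (h : ∀ t, ¬ q.IsRoot t → p.IsRoot t) : p = 0 := by
  have hpq : p * q = 0 := Polynomial.funext fun t => by
    by_cases ht : q.IsRoot t
    · simp [ht.eq_zero]
    · simp [(h t ht).eq_zero]
  exact (mul_eq_zero.mp hpq).resolve_right hq

theorem LinearMap.SeparatingLeft.eq_of_forall_apply_eq {K M N P : Type*} [CommRing K]
    [AddCommGroup M] [Module K M] [AddCommGroup N] [Module K N] [AddCommGroup P] [Module K P]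
    {B : M →ₗ[K] N →ₗ[K] P} (hB : B.SeparatingLeft) {u v : M} (h : ∀ w, B u w = B v w) :
    u = v :=
  sub_eq_zero.mp <| hB _ fun w => by simp [h]

section SlotLinear

variable {f : V → ℝ}

theorem map_add_of_map_smul_add (h : ∀ (a : ℝ) x y, f (a • x + y) = a * f x + f y) (x y : V) :
    f (x + y) = f x + f y := by
  simpa using h 1 x y

theorem map_smul_of_map_smul_add (h : ∀ (a : ℝ) x y, f (a • x + y) = a * f x + f y)
    (a : ℝ) (x : V) : f (a • x) = a * f x := by
  have h0 : f 0 = 0 := by simpa using h 1 0 0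
  simpa [h0] using h a x 0

end SlotLinear

namespace IsCurv

variable {R : V → V → V → V → ℝ}

theorem map_add₁ (hR : IsCurv R) (X X' Y Z W : V) :
    R (X + X') Y Z W = R X Y Z W + R X' Y Z W :=
  map_add_of_map_smul_add (f := (R · Y Z W)) (fun a X X' => hR.1 a X X' Y Z W) X X'

theorem map_smul₁ (hR : IsCurv R) (a : ℝ) (X Y Z W : V) : R (a • X) Y Z W = a * R X Y Z W :=
  map_smul_of_map_smul_add (f := (R · Y Z W)) (fun a X X' => hR.1 a X X' Y Z W) a X

theorem map_add₂ (hR : IsCurv R) (X Y Y' Z W : V) :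
    R X (Y + Y') Z W = R X Y Z W + R X Y' Z W :=
  map_add_of_map_smul_add (f := (R X · Z W)) (fun a Y Y' => hR.2.1 a X Y Y' Z W) Y Y'

theorem map_smul₂ (hR : IsCurv R) (a : ℝ) (X Y Z W : V) : R X (a • Y) Z W = a * R X Y Z W :=
  map_smul_of_map_smul_add (f := (R X · Z W)) (fun a Y Y' => hR.2.1 a X Y Y' Z W) a Y

theorem map_add₃ (hR : IsCurv R) (X Y Z Z' W : V) :
    R X Y (Z + Z') W = R X Y Z W + R X Y Z' W :=
  map_add_of_map_smul_add (f := (R X Y · W)) (fun a Z Z' => hR.2.2.1 a X Y Z Z' W) Z Z'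

theorem map_smul₃ (hR : IsCurv R) (a : ℝ) (X Y Z W : V) : R X Y (a • Z) W = a * R X Y Z W :=
  map_smul_of_map_smul_add (f := (R X Y · W)) (fun a Z Z' => hR.2.2.1 a X Y Z Z' W) a Z

theorem map_add₄ (hR : IsCurv R) (X Y Z W W' : V) :
    R X Y Z (W + W') = R X Y Z W + R X Y Z W' :=
  map_add_of_map_smul_add (f := (R X Y Z ·)) (fun a W W' => hR.2.2.2.1 a X Y Z W W') W W'

theorem map_smul₄ (hR : IsCurv R) (a : ℝ) (X Y Z W : V) : R X Y Z (a • W) = a * R X Y Z W :=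
  map_smul_of_map_smul_add (f := (R X Y Z ·)) (fun a W W' => hR.2.2.2.1 a X Y Z W W') a W

theorem antisymm₁₂ (hR : IsCurv R) (X Y Z W : V) : R X Y Z W = -R Y X Z W := hR.2.2.2.2.1 X Y Z W

theorem pair_symm (hR : IsCurv R) (X Y Z W : V) : R X Y Z W = R Z W X Y := hR.2.2.2.2.2.2.1 X Y Z W

theorem apply_self₁₂ (hR : IsCurv R) (X Z W : V) : R X X Z W = 0 := by
  linarith [hR.antisymm₁₂ X X Z W]

theorem apply_self₃₄ (hR : IsCurv R) (X Y Z : V) : R X Y Z Z = 0 := by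
  linarith [hR.2.2.2.2.2.1 X Y Z Z]

theorem apply_lincomb (hR : IsCurv R) (α β γ δ : ℝ) (u v Z W : V) :
    R (α • u + β • v) (γ • u + δ • v) Z W = (α * δ - β * γ) * R u v Z W := by
  simp only [hR.map_add₁, hR.map_add₂, hR.map_smul₁, hR.map_smul₂, hR.apply_self₁₂,
    hR.antisymm₁₂ v u]
  ring

end IsCurv

section Jacobi

variable {g : V →ₗ[ℝ] V →ₗ[ℝ] ℝ} {R : V → V → V → V → ℝ} {J : V → V →ₗ[ℝ] V}

theorem IsJacobi.apply_smul (hg : g.SeparatingLeft) (hR : IsCurv R) (hJ : IsJacobi g R J)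
    (s : ℝ) (A B : V) : J (s • A) B = s ^ 2 • J A B :=
  hg.eq_of_forall_apply_eq fun C => by
    rw [map_smul, LinearMap.smul_apply, hJ, hJ, hR.map_smul₂, hR.map_smul₃, smul_eq_mul]
    ring

theorem exists_smul_unit {A : V} (hA : g A A ≠ 0) :
    ∃ s : ℝ, s ≠ 0 ∧ (g (s • A) (s • A) = 1 ∨ g (s • A) (s • A) = -1) := by
  set s := (Real.sqrt |g A A|)⁻¹
  have hs2 : s ^ 2 = |g A A|⁻¹ := by rw [inv_pow, Real.sq_sqrt (abs_nonneg _)]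
  have hsA : g (s • A) (s • A) = g A A / |g A A| := by
    simp only [map_smul, LinearMap.smul_apply, smul_eq_mul]
    rw [div_eq_mul_inv, ← hs2]
    ring
  refine ⟨s, inv_ne_zero (Real.sqrt_ne_zero'.mpr (abs_pos.mpr hA)), ?_⟩
  rw [hsA]
  rcases abs_cases (g A A) with ⟨habs, _⟩ | ⟨habs, _⟩ <;> rw [habs]
  · exact Or.inl (div_self hA)
  · exact Or.inr (by field_simp)

theorem JacobiOrthogonal.of_nonnull (hg : g.SeparatingLeft) (hR : IsCurv R)
    (hJ : IsJacobi g R J) (horth : JacobiOrthogonal g J) {A B : V} (hA : g A A ≠ 0)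
    (hB : g B B ≠ 0) (hAB : g A B = 0) : g (J A B) (J B A) = 0 := by
  obtain ⟨s, hs, hsA⟩ := exists_smul_unit hA
  obtain ⟨t, ht, htB⟩ := exists_smul_unit hB
  have h := horth (s • A) (t • B) hsA htB (by simp [hAB])
  simp only [hJ.apply_smul hg hR, map_smul, LinearMap.smul_apply, smul_eq_mul] at h
  have hst : s ^ 3 * t ^ 3 ≠ 0 := by positivity
  have h' : s ^ 3 * t ^ 3 * g (J A B) (J B A) = 0 := by linear_combination h
  exact (mul_eq_zero.mp h').resolve_left hst

end Jacobi

section Extension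

variable {g : V →ₗ[ℝ] V →ₗ[ℝ] ℝ} {R : V → V → V → V → ℝ} {J : V → V →ₗ[ℝ] V}

theorem exists_orthogonal_apply_ne_zero (hgs : ∀ x y : V, g x y = g y x) (hg : g.SeparatingLeft)
    {A B : V} (hA : g A A ≠ 0) (hAB : g A B = 0) (hB : B ≠ 0) :
    ∃ U : V, g A U = 0 ∧ g B U ≠ 0 := by
  by_contra! h
  refine hB (hg B fun C => ?_)
  have hU : g A (C - (g A C / g A A) • A) = 0 := by
    simp only [map_sub, map_smul, smul_eq_mul]
    field_simp
    ring
  have := h _ hU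
  simp only [map_sub, map_smul, smul_eq_mul, hgs B A, hAB] at this
  linarith

/-- Null `B` is approximated by the nonnull `B + t • U`; the quantity is cubic in `t`, and
vanishes off the roots of the nonzero quadratic `g (B + t • U) (B + t • U)`. -/
theorem JacobiOrthogonal.of_nonnull_left (hgs : ∀ x y : V, g x y = g y x)
    (hg : g.SeparatingLeft) (hR : IsCurv R) (hJ : IsJacobi g R J)
    (horth : JacobiOrthogonal g J) {A B : V} (hA : g A A ≠ 0) (hAB : g A B = 0) :
    g (J A B) (J B A) = 0 := by
  rcases eq_or_ne B 0 with rfl | hB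
  · simp
  obtain ⟨U, hAU, hBU⟩ := exists_orthogonal_apply_ne_zero hgs hg hA hAB hB
  set W := J A B
  set W' := J A U
  let p : ℝ[X] := C (R A B B W) + C (R A B B W' + R A U B W + R A B U W) * X
    + C (R A U B W' + R A B U W' + R A U U W) * X ^ 2 + C (R A U U W') * X ^ 3
  let q : ℝ[X] := C (g B B) + C (2 * g B U) * X + C (g U U) * X ^ 2
  have hp (t : ℝ) : p.eval t = g (J A (B + t • U)) (J (B + t • U) A) := by
    rw [hgs, hJ, map_add, map_smul]
    simp only [p, eval_add, eval_mul, eval_C, eval_X, eval_pow, hR.map_add₂, hR.map_add₃,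
      hR.map_add₄, hR.map_smul₂, hR.map_smul₃, hR.map_smul₄]
    ring
  have hq (t : ℝ) : q.eval t = g (B + t • U) (B + t • U) := by
    simp only [q, eval_add, eval_mul, eval_C, eval_X, eval_pow, map_add, map_smul,
      LinearMap.add_apply, LinearMap.smul_apply, smul_eq_mul, hgs U B]
    ring
  have hq0 : q ≠ 0 := fun h0 => hBU <| by
    simpa [q] using congrArg (coeff · 1) h0
  have hp0 : p = 0 := eq_zero_of_isRoot_of_not_isRoot hq0 fun t ht => by
    rw [IsRoot, hp]
    refine horth.of_nonnull hg hR hJ hA (by rwa [IsRoot, hq] at ht) ?_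
    simp [hAB, hAU]
  simpa [hp0] using (hp 0).symm

end Extension

section Eigenvector

variable {g : V →ₗ[ℝ] V →ₗ[ℝ] ℝ} {R : V → V → V → V → ℝ} {J : V → V →ₗ[ℝ] V}

theorem JacobiOrthogonal.apply_jacobi_swap_self_of_ne (hgs : ∀ x y : V, g x y = g y x)
    (hg : g.SeparatingLeft) (hR : IsCurv R) (hJ : IsJacobi g R J)
    (horth : JacobiOrthogonal g J) {X Y : V} {l : ℝ} (hX : g X X ≠ 0) (hYX : g Y X = 0)
    (hYeig : J X Y = (g X X * l) • Y) {a : ℝ} (ha : a ≠ 0) (hD : g X X + a ^ 2 * g Y Y ≠ 0) :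
    g (J Y X) (J Y X) = g X X * g Y Y ^ 2 * l ^ 2 := by
  set P := J Y X
  set D := g X X + a ^ 2 * g Y Y
  set A := (1 : ℝ) • X + a • Y
  set B := (-(a * g Y Y)) • X + g X X • Y
  have hXY : g X Y = 0 := by rw [hgs, hYX]
  have hPY : g P Y = 0 := by rw [hJ, hR.apply_self₃₄]
  have hYXXC (C : V) : R Y X X C = g X X * l * g Y C := by
    rw [← hJ, hYeig, map_smul, LinearMap.smul_apply, smul_eq_mul]
  have hXYXC (C : V) : R X Y X C = -(g X X * l * g Y C) := by
    rw [hR.antisymm₁₂, hYXXC]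
  have hAB : g A B = 0 := by
    simp only [A, B, map_add, map_smul, LinearMap.add_apply, LinearMap.smul_apply, smul_eq_mul,
      hXY, hYX]
    ring
  have hJAB : J A B = D • ((g X X * l) • Y - a • P) := hg.eq_of_forall_apply_eq fun C => by
    rw [hJ, hR.apply_lincomb, hR.map_add₃, hR.map_smul₃, hR.map_smul₃, hXYXC, ← hJ]
    simp only [map_smul, map_sub, LinearMap.smul_apply, LinearMap.sub_apply, smul_eq_mul]
    ring
  have hJBA : J B A = D • ((a * g Y Y * g X X * l) • Y + g X X • P) :=
    hg.eq_of_forall_apply_eq fun C => by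
      rw [hJ, hR.apply_lincomb, hR.map_add₃, hR.map_smul₃, hR.map_smul₃, hXYXC, ← hJ]
      simp only [map_smul, map_add, LinearMap.smul_apply, LinearMap.add_apply, smul_eq_mul]
      ring
  have hA : g A A = D := by
    simp only [A, D, map_add, map_smul, LinearMap.add_apply, LinearMap.smul_apply, smul_eq_mul,
      hXY, hYX]
    ring
  have h := horth.of_nonnull_left hgs hg hR hJ (hA ▸ hD) hAB
  rw [hJAB, hJBA] at h
  simp only [map_smul, map_sub, map_add, LinearMap.smul_apply, LinearMap.sub_apply,
    smul_eq_mul, hPY, hgs Y P] at h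
  have hfac : a * D ^ 2 * g X X ≠ 0 := by positivity
  refine sub_eq_zero.mp ((mul_eq_zero.mp ?_).resolve_left hfac)
  linear_combination -h

theorem JacobiOrthogonal.apply_jacobi_swap_self (hgs : ∀ x y : V, g x y = g y x)
    (hg : g.SeparatingLeft) (hR : IsCurv R) (hJ : IsJacobi g R J)
    (horth : JacobiOrthogonal g J) {X Y : V} {l : ℝ} (hX : g X X ≠ 0) (hYX : g Y X = 0)
    (hYeig : J X Y = (g X X * l) • Y) : g (J Y X) (J Y X) = g X X * g Y Y ^ 2 * l ^ 2 := by
  by_cases h1 : g X X + 1 ^ 2 * g Y Y = 0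
  · refine horth.apply_jacobi_swap_self_of_ne hgs hg hR hJ hX hYX hYeig two_ne_zero ?_
    contrapose! hX
    linear_combination (4 * h1 - hX) / 3
  · exact horth.apply_jacobi_swap_self_of_ne hgs hg hR hJ hX hYX hYeig one_ne_zero h1

end Eigenvector

theorem stmt_7_general {V : Type*} [AddCommGroup V] [Module ℝ V]
(g : V →ₗ[ℝ] V →ₗ[ℝ] ℝ) (hgsymm : ∀ x y : V, g x y = g y x)
    (hgnd : ∀ x : V, (∀ y : V, g x y = 0) → x = 0)
    (R : V → V → V → V → ℝ) (hR : IsCurv R)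
    (J : V → V →ₗ[ℝ] V) (hJ : IsJacobi g R J)
    (horth : JacobiOrthogonal g J)
    (X : V) (hX : g X X ≠ 0) (l : ℝ) (Y : V)
    (hYX : g Y X = 0) (hYeig : J X Y = (g X X * l) • Y) :
    ∃ Z : V, J Y X = (g Y Y * l) • X + Z ∧ g Z Z = 0 := by
  have hPP := horth.apply_jacobi_swap_self hgsymm hgnd hR hJ hX hYX hYeig
  have hPX : g (J Y X) X = g X X * g Y Y * l := by
    rw [hJ, hR.pair_symm, ← hJ, hYeig, map_smul, LinearMap.smul_apply, smul_eq_mul]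
    ring
  refine ⟨J Y X - (g Y Y * l) • X, by abel, ?_⟩
  simp only [map_sub, map_smul, LinearMap.sub_apply, LinearMap.smul_apply, smul_eq_mul]
  rw [hgsymm X (J Y X), hPP, hPX]
  ring

/-- for Jacobi-diagonalizable Jacobi-orthogonal R, nonnull X, and Y with
g(Y,X) = 0 and J_X Y = ε_X λ Y, one has J_Y X = ε_Y λ X + Z with g(Z,Z) = 0. -/
theorem stmt_7 {V : Type*} [AddCommGroup V] [Module ℝ V] [FiniteDimensional ℝ V]
(g : V →ₗ[ℝ] V →ₗ[ℝ] ℝ) (hgsymm : ∀ x y : V, g x y = g y x)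
    (hgnd : ∀ x : V, (∀ y : V, g x y = 0) → x = 0)
    (R : V → V → V → V → ℝ) (hR : IsCurv R)
    (J : V → V →ₗ[ℝ] V) (hJ : IsJacobi g R J)
    (hdiag : JacobiDiagonalizable g J) (horth : JacobiOrthogonal g J)
    (X : V) (hX : g X X ≠ 0) (l : ℝ) (Y : V)
    (hYX : g Y X = 0) (hYeig : J X Y = (g X X * l) • Y) :
    ∃ Z : V, J Y X = (g Y Y * l) • X + Z ∧ g Z Z = 0 :=
  stmt_7_general g hgsymm hgnd R hR J hJ horth X hX l Y hYX hYeig
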